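/- Let D be a Hadamard difference set with parameters (v,k,λ) = (4n, 2n + √n, n + √n) in an abelian group G, with nontrivial character values √n, i√n, -i√n. Let H = D + D^{(-1)} - G (as group ring element). Then H is (the indicator of) a subgroup of G of order 2√n, H² = 2√n·H, H = H^{(-1)}, and the annihilator H^⊥ equals {χ₀} ∪ {χ ∈ Ĝ : χ(D) = √n}. Moreover G must be a 2-group, n = 2^{2m-2} for some m, and (v,k,λ) = (2^{2m}, 2^{2m-1} + 2^{m-1}, 2^{2m-2} + 2^{m-1}). -/

import Mathlib

/-!
For a character `χ`, `χ(H) = χ(D) + conj χ(D) - χ(G)` equals `2√n` when `χ` is trivial and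
`2 Re χ(D)` otherwise, so it only takes the values `2√n` (when `χ = χ₀` or `χ(D) = √n`) and `0`.
Fourier inversion gives `H² = 2√n·H`. Comparing coefficients of `1` gives
`∑ H(g)² = 2√n = ∑ H(g)`, so the integer coefficients of `H` are `0` or `1`, and since
`H(a) H(b)` is a summand of `(H²)(ab)`, the support `S` of `H` is closed under products: `H` is
the indicator of a subgroup of order `2√n`, and `χ` is trivial on `S` iff `χ(H) = |S|`.

If `|G| = 2^a w` with `w` odd, every `χ^(2^a)` takes values in `ℚ(ζ_w)`, which does not contain
`i`; so `χ^(2^a)(D) ≠ ±i√n`, hence `χ^(2^a)` is trivial on `S` for all `χ`, i.e. `S` is a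
`2`-group. Thus `√n = |S|/2` and `|G| = 4n` are powers of `2`.
-/

open Finset

/-- `D` is a `(v,k,λ)` difference set. -/
def IsDiffSet {G : Type*} [Group G] [DecidableEq G] (D : Finset G) (l : ℕ) : Prop :=
  ∀ g : G, g ≠ 1 → ((D ×ˢ D).filter (fun p => p.1 * p.2⁻¹ = g)).card = l

open Complex ComplexConjugate

open ComplexOrder in
theorem Complex.forall_eq_one_of_sum_eq_card {ι : Type*} {s : Finset ι} {z : ι → ℂ}
    (hz : ∀ i ∈ s, ‖z i‖ ≤ 1) (hsum : ∑ i ∈ s, z i = #s) : ∀ i ∈ s, z i = 1 := by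
  have hre : ∑ i ∈ s, (1 - (z i).re) = 0 := by
    rw [sum_sub_distrib, ← re_sum, hsum]
    simp
  have hle : ∀ i ∈ s, 0 ≤ 1 - (z i).re := fun i hi => by linarith [re_le_norm (z i), hz i hi]
  intro i hi
  have hre1 : (z i).re = 1 := by linarith [(sum_eq_zero_iff_of_nonneg hle).1 hre i hi]
  have hnonneg : 0 ≤ z i :=
    re_eq_norm.1 (le_antisymm (re_le_norm (z i)) (by linarith [hz i hi]))
  exact Complex.ext (by simp [hre1]) (by simp [(nonneg_iff.1 hnonneg).2.symm])

namespace MonoidHom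

section Group

variable {G : Type*} [Group G] [Fintype G]

theorem sum_apply_eq_zero_of_ne_one {χ : G →* ℂ} (hχ : χ ≠ 1) : ∑ g, χ g = 0 := by
  obtain ⟨a, ha⟩ : ∃ a, χ a ≠ 1 := by
    by_contra! h
    exact hχ (MonoidHom.ext h)
  refine eq_zero_of_mul_eq_self_left ha ?_
  rw [mul_sum]
  simp_rw [← map_mul]
  exact Fintype.sum_equiv (Equiv.mulLeft a) _ _ fun _ => rfl

theorem norm_apply (χ : G →* ℂ) (g : G) : ‖χ g‖ = 1 :=
  norm_eq_one_of_pow_eq_one (by rw [← map_pow, pow_card_eq_one, map_one]) Fintype.card_ne_zero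

theorem conj_apply (χ : G →* ℂ) (g : G) : conj (χ g) = χ g⁻¹ := by
  rw [map_inv, inv_eq_conj (χ.norm_apply g)]

theorem sum_apply_eq_card_iff (χ : G →* ℂ) (s : Finset G) :
    ∑ g ∈ s, χ g = #s ↔ ∀ g ∈ s, χ g = 1 :=
  ⟨forall_eq_one_of_sum_eq_card fun g _ => (χ.norm_apply g).le,
    fun h => by simp [sum_congr rfl h]⟩

end Group

theorem exists_apply_ne_one {G : Type*} [CommGroup G] [Finite G] {a : G} (ha : a ≠ 1) :
    ∃ χ : G →* ℂ, χ a ≠ 1 := by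
  have : NeZero (Monoid.exponent G) := ⟨Monoid.exponent_ne_zero_of_finite⟩
  obtain ⟨φ, hφ⟩ := CommGroup.exists_apply_ne_one_of_hasEnoughRootsOfUnity G ℂ ha
  exact ⟨(Units.coeHom ℂ).comp φ, fun h => hφ (Units.ext h)⟩

end MonoidHom

theorem eq_zero_of_forall_sum_mul_monoidHom_eq_zero {G : Type*} [CommGroup G] [Fintype G]
    {f : G → ℂ} (hf : ∀ χ : G →* ℂ, ∑ g, f g * χ g = 0) : f = 0 := by
  let L : (Additive G → ℂ) →ₗ[ℂ] ℂ := ∑ g, f g.toMul • LinearMap.proj g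
  have hL : ∀ u, L u = ∑ g, f g.toMul * u g := fun u => by simp [L]
  have hL0 : L = 0 := (AddChar.complexBasis (Additive G)).ext fun ψ => by
    rw [AddChar.complexBasis_apply, hL, LinearMap.zero_apply]
    exact (Fintype.sum_equiv Additive.toMul _ _ fun _ => rfl).trans (hf ψ.toMonoidHom)
  classical
  funext g
  simpa [hL, Pi.single_apply] using LinearMap.congr_fun hL0 (Pi.single (Additive.ofMul g) 1)

namespace MonoidAlgebra

section Monoid

variable {G : Type*} [Monoid G] [Fintype G]

theorem lift_apply_eq_sum_coeff (χ : G →* ℂ) (x : MonoidAlgebra ℤ G) :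
    lift ℤ ℂ G χ x = ∑ g, (x.coeff g : ℂ) * χ g := by
  rw [lift_apply, Finsupp.sum_fintype _ _ (by simp)]
  simp [zsmul_eq_mul]

end Monoid

theorem eq_zero_of_forall_lift_eq_zero {G : Type*} [CommGroup G] [Fintype G]
    {x : MonoidAlgebra ℤ G} (h : ∀ χ : G →* ℂ, lift ℤ ℂ G χ x = 0) : x = 0 := by
  have hx := eq_zero_of_forall_sum_mul_monoidHom_eq_zero (f := fun g => (x.coeff g : ℂ))
    fun χ => lift_apply_eq_sum_coeff χ x ▸ h χ
  ext g
  simpa using congrFun hx g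

section Group

variable {G : Type*} [Group G] [Fintype G]

theorem coeff_mul_eq_sum {R : Type*} [Semiring R] (x y : MonoidAlgebra R G) (g : G) :
    (x * y).coeff g = ∑ h, x.coeff h * y.coeff (h⁻¹ * g) := by
  rw [coeff_mul_apply_left, Finsupp.sum_fintype _ _ (by simp)]

variable {H : MonoidAlgebra ℤ G} {c : ℤ}

theorem coeff_eq_zero_or_one_of_sq_eq_smul (hsq : H ^ 2 = c • H)
    (hinv : ∀ g, H.coeff g⁻¹ = H.coeff g) (hone : H.coeff 1 = 1) (hsum : ∑ g, H.coeff g = c)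
    (g : G) : H.coeff g = 0 ∨ H.coeff g = 1 := by
  have hsq_sum : ∑ h, H.coeff h * H.coeff h = c := by
    have := congrArg (fun x => x.coeff 1) hsq
    simpa only [sq, coeff_mul_eq_sum, coeff_smul_apply, mul_one, hinv, hone, smul_eq_mul]
      using this
  have hzero : ∑ h, (H.coeff h * H.coeff h - H.coeff h) = 0 := by
    rw [sum_sub_distrib, hsq_sum, hsum, sub_self]
  have hnonneg : ∀ h ∈ univ, 0 ≤ H.coeff h * H.coeff h - H.coeff h := fun h _ => by
    nlinarith [Int.le_self_sq (H.coeff h)]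
  have hg : H.coeff g * (H.coeff g - 1) = 0 := by
    linarith [(sum_eq_zero_iff_of_nonneg hnonneg).1 hzero g (mem_univ g)]
  rcases mul_eq_zero.1 hg with h | h
  · exact Or.inl h
  · exact Or.inr (by linarith)

open scoped Classical in
theorem exists_subgroup_coeff_eq_indicator (hsq : H ^ 2 = c • H)
    (hinv : ∀ g, H.coeff g⁻¹ = H.coeff g) (hone : H.coeff 1 = 1) (hsum : ∑ g, H.coeff g = c) :
    ∃ S : Subgroup G, ∀ g, H.coeff g = if g ∈ S then 1 else 0 := by
  have h01 := coeff_eq_zero_or_one_of_sq_eq_smul hsq hinv hone hsum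
  have hnonneg : ∀ g, 0 ≤ H.coeff g := fun g => by rcases h01 g with h | h <;> simp [h]
  have hmul : ∀ a b, H.coeff a = 1 → H.coeff b = 1 → H.coeff (a * b) = 1 := by
    intro a b ha hb
    -- the summand `H(a) H(b) = 1` of `(H * H)(a b) = c H(a b)` keeps it positive
    have hpos : 0 < (H * H).coeff (a * b) := by
      rw [coeff_mul_eq_sum]
      refine lt_of_lt_of_le (by simp [ha, hb]) (single_le_sum (f := fun x =>
        H.coeff x * H.coeff (x⁻¹ * (a * b))) (fun x _ => mul_nonneg (hnonneg x) (hnonneg _))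
        (mem_univ a))
    rw [← sq, hsq, coeff_smul_apply, smul_eq_mul] at hpos
    exact (h01 (a * b)).resolve_left fun h => by simp [h] at hpos
  refine ⟨{ carrier := {g | H.coeff g = 1}
            one_mem' := hone
            mul_mem' := hmul _ _
            inv_mem' := fun {g} hg => (hinv g).trans hg }, fun g => ?_⟩
  split_ifs with hg
  · exact hg
  · exact (h01 g).resolve_right hg

theorem sum_coeff_eq_card {S : Subgroup G} [DecidablePred (· ∈ S)]
    (hS : ∀ g, H.coeff g = if g ∈ S then 1 else 0) : ∑ g, H.coeff g = Nat.card S := by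
  simp_rw [hS, sum_boole, Nat.card_eq_fintype_card, Fintype.card_subtype]

theorem forall_apply_eq_one_iff_lift_eq_card (χ : G →* ℂ) {S : Subgroup G}
    [DecidablePred (· ∈ S)] (hS : ∀ g, H.coeff g = if g ∈ S then 1 else 0) :
    (∀ s ∈ S, χ s = 1) ↔ lift ℤ ℂ G χ H = Nat.card S := by
  have hlift : lift ℤ ℂ G χ H = ∑ g ∈ univ.filter (· ∈ S), χ g := by
    rw [lift_apply_eq_sum_coeff, sum_filter]
    exact sum_congr rfl fun g _ => by rw [hS]; split_ifs <;> simp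
  rw [hlift, Nat.card_eq_fintype_card, Fintype.card_subtype, χ.sum_apply_eq_card_iff]
  simp

end Group

end MonoidAlgebra

open IntermediateField in
theorem Complex.I_notMem_adjoin_of_isPrimitiveRoot {ζ : ℂ} {w : ℕ} (hζ : IsPrimitiveRoot ζ w)
    (hw : Odd w) : I ∉ ℚ⟮ζ⟯ := by
  intro hI
  have : NeZero w := ⟨hw.pos.ne'⟩
  have : IsCyclotomicExtension {w} ℚ ℚ⟮ζ⟯ := by
    change IsCyclotomicExtension {w} ℚ ℚ⟮ζ⟯.toSubalgebra
    rw [adjoin_simple_toSubalgebra_of_isAlgebraic (hζ.isIntegral hw.pos).tower_top.isAlgebraic]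
    exact hζ.adjoin_isCyclotomicExtension ℚ
  have := IsCyclotomicExtension.numberField {w} ℚ ℚ⟮ζ⟯
  have h4 : IsPrimitiveRoot (⟨I, hI⟩ : ℚ⟮ζ⟯) 4 :=
    IsPrimitiveRoot.coe_submonoidClass_iff.mp isPrimitiveRoot_I
  have := h4.dvd_of_isCyclotomicExtension w (by norm_num)
  obtain ⟨k, rfl⟩ := hw
  omega

open IntermediateField in
theorem Complex.sum_ne_I_mul_of_pow_eq_one {ι : Type*} (s : Finset ι) {z : ι → ℂ} {w : ℕ}
    (hw : Odd w) (hz : ∀ i ∈ s, z i ^ w = 1) {q : ℚ} (hq : q ≠ 0) :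
    ∑ i ∈ s, z i ≠ I * q := by
  intro hsum
  have : NeZero w := ⟨hw.pos.ne'⟩
  obtain ⟨ζ, hζ⟩ : ∃ ζ : ℂ, IsPrimitiveRoot ζ w := ⟨_, isPrimitiveRoot_exp w hw.pos.ne'⟩
  apply I_notMem_adjoin_of_isPrimitiveRoot hζ hw
  have hmem : ∑ i ∈ s, z i ∈ ℚ⟮ζ⟯ := sum_mem fun i hi => by
    obtain ⟨j, -, hj⟩ := hζ.eq_pow_of_pow_eq_one (hz i hi)
    exact hj ▸ pow_mem (mem_adjoin_simple_self ℚ ζ) j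
  have hI : I = (∑ i ∈ s, z i) * (q : ℂ)⁻¹ := by
    rw [hsum]
    field_simp
  rw [hI]
  exact mul_mem hmem (inv_mem (by simp))

theorem Subgroup.isPGroup_of_forall_pow_ordCompl_eq_one {G : Type*} [CommGroup G] [Fintype G]
    {p : ℕ} [Fact p.Prime] (S : Subgroup G)
    (h : ∀ ψ : G →* ℂ, (∀ g, ψ g ^ ordCompl[p] (Fintype.card G) = 1) → ∀ s ∈ S, ψ s = 1) :
    IsPGroup p S := by
  rintro ⟨s, hs⟩
  refine ⟨(Fintype.card G).factorization p, Subtype.ext ?_⟩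
  by_contra hne
  obtain ⟨χ, hχ⟩ := MonoidHom.exists_apply_ne_one hne
  refine hχ ?_
  -- `χ ^ p ^ a` has values of order prime to `p`, where `p ^ a ‖ |G|`
  have := h (χ ^ p ^ (Fintype.card G).factorization p) (fun g => by
    rw [MonoidHom.pow_apply, ← pow_mul, Nat.ordProj_mul_ordCompl_eq_self, ← map_pow,
      pow_card_eq_one, map_one]) s hs
  simpa [MonoidHom.pow_apply, ← map_pow] using this

open MonoidAlgebra

section Hadamard

variable {G : Type*} [CommGroup G] [Fintype G]

noncomputable def hadamardElement (D : Finset G) : MonoidAlgebra ℤ G :=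
  (∑ d ∈ D, single d 1) + (∑ d ∈ D, single d⁻¹ 1) - ∑ g, single g 1

theorem coeff_hadamardElement [DecidableEq G] (D : Finset G) (g : G) :
    (hadamardElement D).coeff g = (if g ∈ D then 1 else 0) + (if g⁻¹ ∈ D then 1 else 0) - 1 := by
  simp [hadamardElement, coeff_sum, Finsupp.single_apply, inv_eq_iff_eq_inv]

theorem coeff_hadamardElement_inv (D : Finset G) (g : G) :
    (hadamardElement D).coeff g⁻¹ = (hadamardElement D).coeff g := by
  classical
  rw [coeff_hadamardElement, coeff_hadamardElement, inv_inv, add_comm (ite _ _ _)]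

theorem coeff_hadamardElement_one {D : Finset G} (h1D : 1 ∈ D) :
    (hadamardElement D).coeff 1 = 1 := by
  classical
  simp [coeff_hadamardElement, h1D]

theorem lift_hadamardElement (D : Finset G) (χ : G →* ℂ) :
    lift ℤ ℂ G χ (hadamardElement D) = ∑ d ∈ D, χ d + conj (∑ d ∈ D, χ d) - ∑ g, χ g := by
  simp [hadamardElement, map_sum, MonoidHom.conj_apply]

end Hadamard

/-- Parameters and character values of the plus case of a Hadamard difference set,
with `r = √n`. -/
structure IsHadamardPlus {G : Type*} [CommGroup G] [Fintype G] (D : Finset G) (r : ℕ) :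
    Prop where
  card_group : Fintype.card G = 4 * r ^ 2
  card : #D = 2 * r ^ 2 + r
  sum_apply_mem : ∀ χ : G →* ℂ, χ ≠ 1 →
    ∑ d ∈ D, χ d ∈ ({(r : ℂ), I * r, -(I * r)} : Set ℂ)

namespace IsHadamardPlus

variable {G : Type*} [CommGroup G] [Fintype G] {D : Finset G} {r : ℕ}

open scoped Classical in
theorem lift_hadamardElement (hD : IsHadamardPlus D r) (χ : G →* ℂ) :
    lift ℤ ℂ G χ (hadamardElement D) = if χ = 1 ∨ ∑ d ∈ D, χ d = r then (2 * r : ℂ) else 0 := by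
  rw [_root_.lift_hadamardElement]
  by_cases hχ : χ = 1
  · subst hχ
    simp only [MonoidHom.one_apply, sum_const, card_univ, nsmul_eq_mul, mul_one, map_natCast,
      true_or, if_true, hD.card, hD.card_group]
    push_cast
    ring
  rw [MonoidHom.sum_apply_eq_zero_of_ne_one hχ, sub_zero, add_conj]
  simp only [hχ, false_or]
  split_ifs with h
  · simp [h]
  · obtain h' | h' | h' := hD.sum_apply_mem χ hχ
    · exact absurd h' h
    · simp [h']
    · simp [Set.mem_singleton_iff.1 h']

theorem hadamardElement_sq (hD : IsHadamardPlus D r) :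
    hadamardElement D ^ 2 = (2 * r : ℤ) • hadamardElement D := by
  refine sub_eq_zero.1 (eq_zero_of_forall_lift_eq_zero fun χ => ?_)
  rw [map_sub, map_pow, map_zsmul, hD.lift_hadamardElement]
  split_ifs
  · rw [zsmul_eq_mul]
    push_cast
    ring
  · simp

theorem sum_coeff_hadamardElement (hD : IsHadamardPlus D r) :
    ∑ g, (hadamardElement D).coeff g = 2 * r := by
  have h := hD.lift_hadamardElement 1
  rw [lift_apply_eq_sum_coeff] at h
  simp only [MonoidHom.one_apply, mul_one, true_or, if_true] at h
  exact_mod_cast h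

open scoped Classical in
theorem exists_subgroup_coeff_hadamardElement (hD : IsHadamardPlus D r) (h1D : 1 ∈ D) :
    ∃ S : Subgroup G, ∀ g, (hadamardElement D).coeff g = if g ∈ S then 1 else 0 :=
  exists_subgroup_coeff_eq_indicator hD.hadamardElement_sq (coeff_hadamardElement_inv D)
    (coeff_hadamardElement_one h1D) hD.sum_coeff_hadamardElement

theorem card_subgroup {S : Subgroup G} [DecidablePred (· ∈ S)] (hD : IsHadamardPlus D r)
    (hS : ∀ g, (hadamardElement D).coeff g = if g ∈ S then 1 else 0) :
    Nat.card S = 2 * r := by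
  have h := (sum_coeff_eq_card hS).symm.trans hD.sum_coeff_hadamardElement
  exact_mod_cast h

theorem annihilator_eq {S : Subgroup G} [DecidablePred (· ∈ S)] (hD : IsHadamardPlus D r)
    (hr : 0 < r) (hS : ∀ g, (hadamardElement D).coeff g = if g ∈ S then 1 else 0) :
    {χ : G →* ℂ | ∀ s ∈ S, χ s = 1} = {χ : G →* ℂ | χ = 1 ∨ ∑ d ∈ D, χ d = r} := by
  classical
  ext χ
  rw [Set.mem_ofPred_eq, forall_apply_eq_one_iff_lift_eq_card χ hS, hD.card_subgroup hS,
    hD.lift_hadamardElement]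
  split_ifs with h
  · simpa using h
  · simpa [hr.ne'] using h

theorem eq_one_or_sum_eq_of_pow_eq_one (hD : IsHadamardPlus D r) (hr : 0 < r) {w : ℕ}
    (hw : Odd w) {ψ : G →* ℂ} (hψ : ∀ g, ψ g ^ w = 1) : ψ = 1 ∨ ∑ d ∈ D, ψ d = r := by
  by_cases hψ1 : ψ = 1
  · exact Or.inl hψ1
  have hr' : (r : ℚ) ≠ 0 := by exact_mod_cast hr.ne'
  obtain h | h | h := hD.sum_apply_mem ψ hψ1
  · exact Or.inr h
  · exact absurd (by simpa using h) (sum_ne_I_mul_of_pow_eq_one D hw (fun d _ => hψ d) hr')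
  · exact absurd (by simpa using Set.mem_singleton_iff.1 h)
      (sum_ne_I_mul_of_pow_eq_one D hw (fun d _ => hψ d) (neg_ne_zero.2 hr'))

end IsHadamardPlus

open scoped Classical in
theorem hadamard_plus_case_general {G : Type*} [CommGroup G] [Fintype G]
    (D : Finset G) (v k lam n r : ℕ) (hr : r ^ 2 = n) (hrpos : 0 < r)
    (hv : Fintype.card G = v) (hk : D.card = k)
    (hv4 : v = 4 * n) (hkn : k = 2 * n + r) (hlam : lam = n + r)
    (h1D : (1 : G) ∈ D)
    (hvals : {z : ℂ | ∃ χ : G →* ℂ, χ ≠ 1 ∧ ∑ d ∈ D, χ d = z}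
      = {(r : ℂ), Complex.I * (r : ℂ), -(Complex.I * (r : ℂ))})
    (H : MonoidAlgebra ℤ G)
    (hH : H = (∑ d ∈ D, MonoidAlgebra.single d (1 : ℤ)) +
        (∑ d ∈ D, MonoidAlgebra.single d⁻¹ (1 : ℤ)) -
        (∑ g : G, MonoidAlgebra.single g (1 : ℤ))) :
    (∃ S : Subgroup G,
      (∀ g : G, H.coeff g = if g ∈ S then (1 : ℤ) else 0) ∧
      Nat.card S = 2 * r ∧
      H ^ 2 = (2 * (r : ℤ)) • H ∧
      Finsupp.equivMapDomain (Equiv.inv G) H.coeff = H.coeff ∧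
      {χ : G →* ℂ | ∀ h ∈ S, χ h = 1} =
        {χ : G →* ℂ | χ = 1 ∨ ∑ d ∈ D, χ d = (r : ℂ)}) ∧
    IsPGroup 2 G ∧
    ∃ m : ℕ, 0 < m ∧ v = 2 ^ (2 * m) ∧ k = 2 ^ (2 * m - 1) + 2 ^ (m - 1) ∧
      lam = 2 ^ (2 * m - 2) + 2 ^ (m - 1) ∧ n = 2 ^ (2 * m - 2) := by
  obtain rfl : H = hadamardElement D := hH
  have hD : IsHadamardPlus D r :=
    ⟨by rw [hv, hv4, ← hr], by rw [hk, hkn, ← hr], fun χ hχ => hvals ▸ ⟨χ, hχ, rfl⟩⟩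
  obtain ⟨S, hS⟩ := hD.exists_subgroup_coeff_hadamardElement h1D
  have hcard := hD.card_subgroup hS
  have hann := hD.annihilator_eq hrpos hS
  have hS2 : IsPGroup 2 S := S.isPGroup_of_forall_pow_ordCompl_eq_one fun ψ hψ =>
    (Set.ext_iff.1 hann ψ).2 <| hD.eq_one_or_sum_eq_of_pow_eq_one hrpos
      (Nat.odd_iff.2 <| Nat.two_dvd_ne_zero.1 <|
        Nat.not_dvd_ordCompl Nat.prime_two Fintype.card_ne_zero) hψ
  obtain ⟨_ | m, he⟩ := IsPGroup.iff_card.1 hS2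
  · rw [pow_zero] at he
    omega
  obtain rfl : r = 2 ^ m := by rw [pow_succ] at he; omega
  subst hr hv4 hkn hlam
  refine ⟨⟨S, hS, hcard, hD.hadamardElement_sq, Finsupp.ext fun g => ?_, hann⟩,
    IsPGroup.of_card (n := 2 * m + 2) ?_, m + 1, by omega, ?_, ?_, ?_, ?_⟩
  · exact coeff_hadamardElement_inv D g
  · rw [Nat.card_eq_fintype_card, hv]; ring
  · ring
  all_goals
    simp only [Nat.add_sub_cancel, show 2 * (m + 1) - 1 = 2 * m + 1 by omega,
      show 2 * (m + 1) - 2 = 2 * m by omega]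
    ring

open scoped Classical in
/-- Let `D` be a Hadamard difference set with parameters `(4n, 2n+√n, n+√n)` in an
abelian group `G`, with the three nontrivial character values `√n, i√n, -i√n`, and
`1 ∈ D`. Then `H = D + D^{(-1)} - G` is the indicator of a subgroup `S ≤ G` of order
`2√n`, `H² = 2√n·H`, `H = H^{(-1)}`, and the annihilator `S^⊥` equals
`{χ₀} ∪ {χ : χ(D) = √n}`. Moreover `G` is a `2`-group and
`(v,k,λ,n) = (2^{2m}, 2^{2m-1}+2^{m-1}, 2^{2m-2}+2^{m-1}, 2^{2m-2})` for some `m ≥ 1`. -/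
theorem hadamard_plus_case {G : Type*} [CommGroup G] [Fintype G] [DecidableEq G]
    (D : Finset G) (v k lam n r : ℕ) (hr : r ^ 2 = n) (hrpos : 0 < r)
    (hv : Fintype.card G = v) (hk : D.card = k) (hDS : IsDiffSet D lam)
    (hv4 : v = 4 * n) (hkn : k = 2 * n + r) (hlam : lam = n + r)
    (h1D : (1 : G) ∈ D)
    (hvals : {z : ℂ | ∃ χ : G →* ℂ, χ ≠ 1 ∧ ∑ d ∈ D, χ d = z}
      = {(r : ℂ), Complex.I * (r : ℂ), -(Complex.I * (r : ℂ))})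
    (H : MonoidAlgebra ℤ G)
    (hH : H = (∑ d ∈ D, MonoidAlgebra.single d (1 : ℤ)) +
        (∑ d ∈ D, MonoidAlgebra.single d⁻¹ (1 : ℤ)) -
        (∑ g : G, MonoidAlgebra.single g (1 : ℤ))) :
    (∃ S : Subgroup G,
      (∀ g : G, H.coeff g = if g ∈ S then (1 : ℤ) else 0) ∧
      Nat.card S = 2 * r ∧
      H ^ 2 = (2 * (r : ℤ)) • H ∧
      Finsupp.equivMapDomain (Equiv.inv G) H.coeff = H.coeff ∧
      {χ : G →* ℂ | ∀ h ∈ S, χ h = 1} =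
        {χ : G →* ℂ | χ = 1 ∨ ∑ d ∈ D, χ d = (r : ℂ)}) ∧
    IsPGroup 2 G ∧
    ∃ m : ℕ, 0 < m ∧ v = 2 ^ (2 * m) ∧ k = 2 ^ (2 * m - 1) + 2 ^ (m - 1) ∧
      lam = 2 ^ (2 * m - 2) + 2 ^ (m - 1) ∧ n = 2 ^ (2 * m - 2) :=
  hadamard_plus_case_general D v k lam n r hr hrpos hv hk hv4 hkn hlam h1D hvals H hH
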